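/- arXiv:1503.01098 — 5 statements merged into one kernel-verified Lean document; each statement's English description precedes it below -/
import Mathlib

section
/- Let w be an equistable function of a graph G. Then for every positive integer i, the set V_i^w = {x ∈ V(G) : w(x) = i} is contained in a single twin class of G. -/
open Finset

variable {V : Type*}

/-- Two vertices are twins if they have the same neighbors other than each other. -/
def Twins (G : SimpleGraph V) (u v : V) : Prop :=
  G.neighborSet u \ {v} = G.neighborSet v \ {u}

/-- A twin class is an equivalence class of the twin relation. -/
def TwinClass (G : SimpleGraph V) (C : Set V) : Prop :=
  ∃ u, C = {v | Twins G u v}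

/-- A stable (independent) set of vertices. -/
def IsStable (G : SimpleGraph V) (S : Set V) : Prop :=
  ∀ ⦃x⦄, x ∈ S → ∀ ⦃y⦄, y ∈ S → ¬ G.Adj x y

/-- A maximal stable set. -/
def IsMaxStable [Fintype V] [DecidableEq V] (G : SimpleGraph V) (S : Finset V) : Prop :=
  IsStable G ↑S ∧ ∀ T : Finset V, IsStable G ↑T → S ⊆ T → S = T

/-- `(w, t)` is an equistable structure of `G`: a set is a maximal stable set
iff its total weight is `t`. -/
def EquistableStruct [Fintype V] [DecidableEq V] (G : SimpleGraph V) (w : V → ℕ) (t : ℕ) : Prop :=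
  ∀ S : Finset V, IsMaxStable G S ↔ ∑ x ∈ S, w x = t

/-- `G` is `k`-equistable: it has an equistable structure with weights in `{1,…,k}`. -/
def KEquistable [Fintype V] [DecidableEq V] (G : SimpleGraph V) (k : ℕ) : Prop :=
  ∃ t : ℕ, 0 < t ∧ ∃ w : V → ℕ, (∀ x, 1 ≤ w x ∧ w x ≤ k) ∧ EquistableStruct G w t

/-- `G` is target-`t` equistable: it has an equistable structure with positive
integer weights and target `t`. -/
def TargetEquistable [Fintype V] [DecidableEq V] (G : SimpleGraph V) (t : ℕ) : Prop :=
  ∃ w : V → ℕ, (∀ x, 1 ≤ w x) ∧ EquistableStruct G w t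


lemma exists_maxStable_superset [Fintype V] [DecidableEq V] (G : SimpleGraph V)
    (A : Finset V) (hA : IsStable G ↑A) : ∃ S : Finset V, IsMaxStable G S ∧ A ⊆ S := by
  classical
  set 𝒮 : Finset (Finset V) := Finset.univ.filter (fun T => A ⊆ T ∧ IsStable G ↑T) with h𝒮
  have hAmem : A ∈ 𝒮 := by simp [h𝒮, hA]
  obtain ⟨S, hS, hmax⟩ := Finset.exists_max_image 𝒮 Finset.card ⟨A, hAmem⟩
  simp only [h𝒮, Finset.mem_filter] at hS
  refine ⟨S, ⟨hS.2.2, ?_⟩, hS.2.1⟩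
  intro T hT hST
  refine Finset.eq_of_subset_of_card_le hST ?_
  exact hmax T (by simp [h𝒮, hT, hS.2.1.trans hST])

lemma twins_of_weight_eq_aux [Fintype V] [DecidableEq V] (G : SimpleGraph V) (w : V → ℕ)
    (t : ℕ) (hw : EquistableStruct G w t) {u v z : V} (huv : w u = w v)
    (hzu : G.Adj z u) (hzv : z ≠ v) (hznv : ¬ G.Adj z v) : False := by
  classical
  have hAst : IsStable G ↑({v, z} : Finset V) := by
    intro x hx y hy
    simp only [Finset.coe_insert, Finset.coe_singleton, Set.mem_insert_iff,
      Set.mem_singleton_iff] at hx hy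
    rcases hx with rfl | rfl <;> rcases hy with rfl | rfl <;>
      simp_all [SimpleGraph.irrefl]
    · exact fun h => hznv h.symm
  obtain ⟨S, hS, hAS⟩ := exists_maxStable_superset G _ hAst
  have hvS : v ∈ S := hAS (by simp)
  have hzS : z ∈ S := hAS (by simp)
  have huS : u ∉ S := fun huS => hS.1 (by exact_mod_cast hzS) (by exact_mod_cast huS) hzu
  have hune : u ≠ v := by rintro rfl; exact hznv hzu
  set S' : Finset V := insert u (S.erase v) with hS'
  have huS' : u ∉ S.erase v := fun h => huS (Finset.mem_of_mem_erase h)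
  have hsum : ∑ x ∈ S', w x = t := by
    rw [hS', Finset.sum_insert huS', huv]
    rw [Finset.add_sum_erase S w hvS]
    exact (hw S).mp hS
  have hS'max : IsMaxStable G S' := (hw S').mpr hsum
  have hzS' : z ∈ S' := by
    rw [hS']; exact Finset.mem_insert_of_mem (Finset.mem_erase.mpr ⟨hzv, hzS⟩)
  have huS'' : u ∈ S' := by simp [hS']
  exact hS'max.1 (by exact_mod_cast hzS') (by exact_mod_cast huS'') hzu

lemma twins_of_weight_eq [Fintype V] [DecidableEq V] (G : SimpleGraph V) (w : V → ℕ)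
    (t : ℕ) (hw : EquistableStruct G w t) {u v : V} (huv : w u = w v) : Twins G u v := by
  classical
  unfold Twins
  ext z
  simp only [Set.mem_diff, SimpleGraph.mem_neighborSet, Set.mem_singleton_iff]
  constructor
  · rintro ⟨hzu, hzv⟩
    refine ⟨?_, fun h => ?_⟩
    · by_contra hnv
      exact twins_of_weight_eq_aux G w t hw huv hzu.symm hzv (fun h => hnv h.symm)
    · subst h; exact hzu.ne' rfl
  · rintro ⟨hzv, hzu⟩
    refine ⟨?_, fun h => ?_⟩
    · by_contra hnu
      exact twins_of_weight_eq_aux G w t hw huv.symm hzv.symm hzu (fun h => hnu h.symm)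
    · subst h; exact hzv.ne' rfl

theorem stmt4 [Fintype V] [DecidableEq V] [Nonempty V] (G : SimpleGraph V) (w : V → ℕ)
    (t : ℕ) (hw : EquistableStruct G w t) (i : ℕ) (hi : 0 < i) :
    ∃ C : Set V, TwinClass G C ∧ {x | w x = i} ⊆ C := by
  classical
  by_cases h : ∃ u, w u = i
  · obtain ⟨u, hu⟩ := h
    refine ⟨{v | Twins G u v}, ⟨u, rfl⟩, fun x hx => ?_⟩
    exact twins_of_weight_eq G w t hw (by rw [hu, hx])
  · obtain ⟨u⟩ := ‹Nonempty V›
    refine ⟨{v | Twins G u v}, ⟨u, rfl⟩, fun x hx => absurd ⟨x, hx⟩ h⟩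
end

section
/- If a graph G is k-equistable, then the number of twin classes of G is at most k. -/
open Finset

variable {V : Type*}

lemma twins_iff (G : SimpleGraph V) (u v : V) :
    Twins G u v ↔ ∀ x, x ≠ u → x ≠ v → (G.Adj u x ↔ G.Adj v x) := by
  unfold Twins
  rw [Set.ext_iff]
  constructor
  · intro h x hxu hxv
    have := h x
    simp only [Set.mem_diff, SimpleGraph.mem_neighborSet, Set.mem_singleton_iff] at this
    constructor
    · intro ha; exact (this.mp ⟨ha, hxv⟩).1
    · intro ha; exact (this.mpr ⟨ha, hxu⟩).1
  · intro h x
    simp only [Set.mem_diff, SimpleGraph.mem_neighborSet, Set.mem_singleton_iff]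
    by_cases hxu : x = u
    · subst hxu
      simp [G.irrefl]
    · by_cases hxv : x = v
      · subst hxv
        simp [G.irrefl]
      · have := h x hxu hxv
        tauto

lemma twins_refl (G : SimpleGraph V) (u : V) : Twins G u u := rfl

lemma twins_symm {G : SimpleGraph V} {u v : V} (h : Twins G u v) : Twins G v u := h.symm

lemma twins_trans {G : SimpleGraph V} {u v z : V} (h1 : Twins G u v) (h2 : Twins G v z) :
    Twins G u z := by
  rcases eq_or_ne u v with rfl | huv
  · exact h2
  rcases eq_or_ne v z with rfl | hvz
  · exact h1
  rcases eq_or_ne u z with rfl | huz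
  · exact twins_refl G u
  rw [twins_iff] at h1 h2 ⊢
  have key : G.Adj u v ↔ G.Adj v z := by
    constructor
    · intro huv'
      by_contra hvz'
      have h3 : ¬ G.Adj u z := fun ha => hvz' ((h1 z huz.symm hvz.symm).mp ha)
      have h4 : G.Adj z u := (h2 u huv huz).mp huv'.symm
      exact h3 h4.symm
    · intro hvz'
      by_contra huv'
      have h3 : G.Adj u z := (h1 z huz.symm hvz.symm).mpr hvz'
      have h4 : ¬ G.Adj z u := fun ha => huv' ((h2 u huv huz).mpr ha).symm
      exact h4 h3.symm
  intro x hxu hxz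
  by_cases hxv : x = v
  · subst hxv
    exact key.trans ⟨fun a => a.symm, fun a => a.symm⟩
  · exact (h1 x hxu hxv).trans (h2 x hxv hxz)

lemma exists_max_stable [Fintype V] [DecidableEq V] (G : SimpleGraph V) (A : Finset V)
    (hA : IsStable G ↑A) : ∃ S : Finset V, A ⊆ S ∧ IsMaxStable G S := by
  classical
  obtain ⟨S, hS, hmax⟩ := Finset.exists_max_image
    (Finset.univ.powerset.filter (fun T : Finset V => IsStable G ↑T ∧ A ⊆ T)) Finset.card
    ⟨A, by simp [hA]⟩
  simp only [Finset.mem_filter] at hS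
  refine ⟨S, hS.2.2, hS.2.1, ?_⟩
  intro T hT hST
  have hTmem : T ∈ Finset.univ.powerset.filter (fun T : Finset V => IsStable G ↑T ∧ A ⊆ T) := by
    simp only [Finset.mem_filter, Finset.mem_powerset]
    exact ⟨Finset.subset_univ T, hT, hS.2.2.trans hST⟩
  exact Finset.eq_of_subset_of_card_le hST (hmax T hTmem)

lemma eq_weight_twins [Fintype V] [DecidableEq V] (G : SimpleGraph V) {w : V → ℕ} {t : ℕ}
    (hs : EquistableStruct G w t) {u v : V} (h : w u = w v) : Twins G u v := by
  rcases eq_or_ne u v with rfl | huv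
  · exact twins_refl G u
  rw [twins_iff]
  suffices H : ∀ a b : V, a ≠ b → w a = w b → ∀ x, x ≠ a → x ≠ b → G.Adj a x → G.Adj b x by
    intro x hxu hxv
    exact ⟨fun h' => H u v huv h x hxu hxv h', fun h' => H v u huv.symm h.symm x hxv hxu h'⟩
  intro a b hab hw' x hxa hxb hax
  by_contra hbx
  have hstab : IsStable G ↑({x, b} : Finset V) := by
    intro p hp q hq
    simp only [Finset.coe_insert, Finset.coe_singleton, Set.mem_insert_iff,
      Set.mem_singleton_iff] at hp hq
    rcases hp with rfl | rfl <;> rcases hq with rfl | rfl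
    · exact G.irrefl
    · exact fun ha => hbx ha.symm
    · exact hbx
    · exact G.irrefl
  obtain ⟨S, hsub, hmax⟩ := exists_max_stable G {x, b} hstab
  have hxS : x ∈ S := hsub (by simp)
  have hbS : b ∈ S := hsub (by simp)
  have haS : a ∉ S := by
    intro haS
    exact hmax.1 (by exact_mod_cast haS) (by exact_mod_cast hxS) hax
  have haS' : a ∉ S.erase b := fun h' => haS (Finset.mem_of_mem_erase h')
  have h1 : ∑ y ∈ S, w y = t := (hs S).mp hmax
  have h2 : ∑ y ∈ S.erase b, w y + w b = ∑ y ∈ S, w y := Finset.sum_erase_add _ _ hbS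
  have hsum : ∑ y ∈ insert a (S.erase b), w y = t := by
    rw [Finset.sum_insert haS']
    omega
  have hmax' : IsMaxStable G (insert a (S.erase b)) := (hs _).mpr hsum
  refine hmax'.1 (x := a) ?_ (y := x) ?_ hax
  · simp
  · simp only [Finset.coe_insert, Set.mem_insert_iff, Finset.mem_coe, Finset.mem_erase]
    exact Or.inr ⟨hxb, hxS⟩

theorem stmt5 [Fintype V] [DecidableEq V] (G : SimpleGraph V) (k : ℕ)
    (h : KEquistable G k) : {C : Set V | TwinClass G C}.ncard ≤ k := by
  classical
  obtain ⟨t, ht, w, hw, hs⟩ := h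
  set f : Set V → ℕ := fun C => if hC : TwinClass G C then w hC.choose else 0 with hf
  have maps : Set.MapsTo f {C | TwinClass G C} (Set.Icc 1 k) := by
    intro C hC
    have hC' : TwinClass G C := hC
    simp only [Set.mem_Icc, hf]
    rw [dif_pos hC']
    exact ⟨(hw _).1, (hw _).2⟩
  have inj : Set.InjOn f {C | TwinClass G C} := by
    intro C1 h1 C2 h2 hf12
    have h1' : TwinClass G C1 := h1
    have h2' : TwinClass G C2 := h2
    simp only [hf, dif_pos h1', dif_pos h2'] at hf12
    have htw := eq_weight_twins G hs hf12
    rw [h1'.choose_spec, h2'.choose_spec]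
    ext v
    simp only [Set.mem_setOf_eq]
    exact ⟨fun hv => twins_trans (twins_symm htw) hv, fun hv => twins_trans htw hv⟩
  calc {C : Set V | TwinClass G C}.ncard ≤ (Set.Icc 1 k).ncard :=
        Set.ncard_le_ncard_of_injOn f maps inj (Set.finite_Icc 1 k)
    _ = k := by rw [← Finset.coe_Icc, Set.ncard_coe_finset, Nat.card_Icc]; omega
end

section
/- If a graph G is target-t equistable, then the number of twin classes of G is at most t. -/
open Finset

variable {V : Type*}

/-! ### Auxiliary lemmas -/

lemma twins_adj {G : SimpleGraph V} {u v : V} (h : Twins G u v) {x : V}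
    (hxu : x ≠ u) (hxv : x ≠ v) : G.Adj u x ↔ G.Adj v x := by
  have := Set.ext_iff.mp h x
  simp only [Set.mem_diff, SimpleGraph.mem_neighborSet, Set.mem_singleton_iff] at this
  tauto

lemma twins_of {G : SimpleGraph V} {u v : V}
    (h : ∀ x, x ≠ u → x ≠ v → (G.Adj u x ↔ G.Adj v x)) : Twins G u v := by
  ext x
  simp only [Set.mem_diff, SimpleGraph.mem_neighborSet, Set.mem_singleton_iff]
  constructor
  · rintro ⟨hadj, hxv⟩
    exact ⟨(h x hadj.ne' hxv).mp hadj, hadj.ne'⟩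
  · rintro ⟨hadj, hxu⟩
    exact ⟨(h x hxu hadj.ne').mpr hadj, hadj.ne'⟩

lemma class_eq {G : SimpleGraph V} {u v : V} (h : Twins G u v) :
    {a | Twins G u a} = {a | Twins G v a} := by
  have hsymm : Twins G v u := h.symm
  ext a
  exact ⟨fun ha => twins_trans hsymm ha, fun ha => twins_trans h ha⟩

section Aux
variable [Fintype V] [DecidableEq V]

lemma exists_max_superset (G : SimpleGraph V) (S : Finset V) (hS : IsStable G ↑S) :
    ∃ T : Finset V, S ⊆ T ∧ IsMaxStable G T := by
  classical
  have hne : (Finset.univ.filter (fun T : Finset V => IsStable G ↑T ∧ S ⊆ T)).Nonempty :=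
    ⟨S, by simp [hS]⟩
  obtain ⟨T, hTmem, hTmax⟩ := Finset.exists_max_image _ Finset.card hne
  simp only [Finset.mem_filter, Finset.mem_univ, true_and] at hTmem
  refine ⟨T, hTmem.2, hTmem.1, ?_⟩
  intro T' hT' hsub
  refine Finset.eq_of_subset_of_card_le hsub ?_
  apply hTmax T'
  simp only [Finset.mem_filter, Finset.mem_univ, true_and]
  exact ⟨hT', hTmem.2.trans hsub⟩

lemma weight_le {G : SimpleGraph V} {w : V → ℕ} {t : ℕ}
    (hES : EquistableStruct G w t) (v : V) : w v ≤ t := by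
  have hs : IsStable G ↑({v} : Finset V) := by
    intro x hx y hy
    simp only [Finset.coe_singleton, Set.mem_singleton_iff] at hx hy
    subst hx; subst hy
    exact fun hadj => G.irrefl hadj
  obtain ⟨T, hvT, hmax⟩ := exists_max_superset G {v} hs
  have ht := (hES T).mp hmax
  calc w v ≤ ∑ x ∈ T, w x :=
        Finset.single_le_sum (fun i _ => Nat.zero_le _) (hvT (by simp))
    _ = t := ht

lemma adj_of_eq_weight {G : SimpleGraph V} {w : V → ℕ} {t : ℕ}
    (hES : EquistableStruct G w t) {a b : V} (hab : a ≠ b) (hw : w a = w b)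
    {z : V} (hz : z ≠ b) (haz : G.Adj a z) : G.Adj b z := by
  by_contra hnadj
  have hstab : IsStable G ↑({b, z} : Finset V) := by
    intro x hx y hy
    simp only [Finset.coe_insert, Finset.coe_singleton, Set.mem_insert_iff,
      Set.mem_singleton_iff] at hx hy
    rcases hx with rfl | rfl <;> rcases hy with rfl | rfl
    · exact fun hadj => G.irrefl hadj
    · exact hnadj
    · exact fun hadj => hnadj hadj.symm
    · exact fun hadj => G.irrefl hadj
  obtain ⟨T, hsub, hmax⟩ := exists_max_superset G _ hstab
  have hbT : b ∈ T := hsub (by simp)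
  have hzT : z ∈ T := hsub (by simp)
  have haT : a ∉ T := fun haT =>
    hmax.1 (Finset.mem_coe.mpr haT) (Finset.mem_coe.mpr hzT) haz
  have hT := (hES T).mp hmax
  have haerase : a ∉ T.erase b := fun h => haT (Finset.mem_of_mem_erase h)
  have hsum : ∑ x ∈ insert a (T.erase b), w x = t := by
    rw [Finset.sum_insert haerase]
    have h2 : w b + ∑ x ∈ T.erase b, w x = ∑ x ∈ T, w x := Finset.add_sum_erase T w hbT
    omega
  have hmax' := (hES (insert a (T.erase b))).mpr hsum
  have hzT' : z ∈ insert a (T.erase b) :=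
    Finset.mem_insert_of_mem (Finset.mem_erase.mpr ⟨hz, hzT⟩)
  exact hmax'.1 (Finset.mem_coe.mpr (Finset.mem_insert_self a _))
    (Finset.mem_coe.mpr hzT') haz

lemma twins_of_eq_weight {G : SimpleGraph V} {w : V → ℕ} {t : ℕ}
    (hES : EquistableStruct G w t) {a b : V} (hw : w a = w b) : Twins G a b := by
  by_cases hab : a = b
  · subst hab; exact twins_of fun x _ _ => Iff.rfl
  apply twins_of
  intro x hxa hxb
  constructor
  · exact fun hadj => adj_of_eq_weight hES hab hw hxb hadj
  · exact fun hadj => adj_of_eq_weight hES (Ne.symm hab) hw.symm hxa hadj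

end Aux

theorem stmt6 [Fintype V] [DecidableEq V] (G : SimpleGraph V) (t : ℕ)
    (h : TargetEquistable G t) : {C : Set V | TwinClass G C}.ncard ≤ t := by
  classical
  obtain ⟨w, hw1, hES⟩ := h
  set f : V → Set V := fun u => {v | Twins G u v} with hf
  have hK : {C : Set V | TwinClass G C} = Set.range f := by
    ext C
    simp only [Set.mem_setOf_eq, TwinClass, Set.mem_range, hf, eq_comm]
  rw [hK]
  set g : ℕ → Set V := fun n => if h : ∃ u, w u = n then f h.choose else ∅ with hg
  have hfg : f = g ∘ w := by
    funext u
    have hex : ∃ u', w u' = w u := ⟨u, rfl⟩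
    simp only [hg, Function.comp_apply, dif_pos hex]
    have hwc : w hex.choose = w u := hex.choose_spec
    by_cases hc : hex.choose = u
    · rw [hc]
    · exact (class_eq (twins_of_eq_weight hES hwc)).symm
  have h1 : (Set.range f).ncard = (g '' Set.range w).ncard := by
    rw [hfg, Set.range_comp]
  rw [h1]
  have h2 : (g '' Set.range w).ncard ≤ (Set.range w).ncard :=
    Set.ncard_image_le (Set.finite_range w)
  have h3 : (Set.range w).ncard ≤ (Set.Icc 1 t).ncard := by
    apply Set.ncard_le_ncard _ (Set.finite_Icc 1 t)
    rintro n ⟨v, rfl⟩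
    exact Set.mem_Icc.mpr ⟨hw1 v, weight_le hES v⟩
  have h4 : (Set.Icc (1:ℕ) t).ncard = t := by
    rw [← Finset.coe_Icc, Set.ncard_coe_finset, Nat.card_Icc]; omega
  omega
end

section
/- Let w be an equistable function of an equistable graph G, and let C be a clique class (a twin class that is a clique with at least 2 vertices, or more generally a twin class forming a clique). Then there exists a positive integer i such that C = {x ∈ V(G) : w(x) = i}, i.e., w is constant on C and no vertex outside C has the same weight. -/
open Finset

variable {V : Type*}

/-!
Swapping one vertex of a maximal stable set for another changes its weight by the difference of
the two weights, so for an equistable `w` such a swap again gives a maximal stable set exactly when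
the two weights agree. Adjacent twins can always be swapped, hence have equal weights. Conversely,
if `w a = w b` and some neighbour `z ≠ b` of `a` were not adjacent to `b`, then a maximal stable set
through `b` and `z` could trade `b` for `a` and would stay maximal, although `a` and `z` are adjacent;
so vertices of equal weight are twins. Any two vertices of a clique class are adjacent twins.
-/

variable {G : SimpleGraph V}

lemma Twins.adj_iff {u x c : V} (h : Twins G u x) (hcu : c ≠ u) (hcx : c ≠ x) :
    G.Adj u c ↔ G.Adj x c := by
  simpa [hcu, hcx] using congrArg (c ∈ ·) h

lemma twins_of_forall_adj {a b : V} (hab : ∀ z, G.Adj a z → z ≠ b → G.Adj b z)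
    (hba : ∀ z, G.Adj b z → z ≠ a → G.Adj a z) : Twins G a b := by
  ext z
  simp only [Set.mem_sdiff, SimpleGraph.mem_neighborSet, Set.mem_singleton_iff]
  exact ⟨fun ⟨hz, hzb⟩ => ⟨hab z hz hzb, (G.ne_of_adj hz).symm⟩,
    fun ⟨hz, hza⟩ => ⟨hba z hz hza, (G.ne_of_adj hz).symm⟩⟩

lemma isStable_singleton (x : V) : IsStable G {x} := by
  rintro _ rfl _ rfl
  exact G.loopless.irrefl _

lemma isStable_insert {x : V} {A : Set V} :
    IsStable G (insert x A) ↔ IsStable G A ∧ ∀ y ∈ A, ¬ G.Adj x y := by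
  refine ⟨fun h => ⟨fun a ha b hb => h (.inr ha) (.inr hb), fun y hy => h (.inl rfl) (.inr hy)⟩,
    fun ⟨hA, hx⟩ => ?_⟩
  rintro a (rfl | ha) b (rfl | hb)
  · exact G.loopless.irrefl _
  · exact hx b hb
  · exact fun hab => hx a ha hab.symm
  · exact hA ha hb

section MaxStable

variable [Fintype V] [DecidableEq V]

lemma isMaxStable_iff_maximal {S : Finset V} :
    IsMaxStable G S ↔ Maximal (fun T : Finset V => IsStable G T) S :=
  ⟨fun ⟨hS, hmax⟩ => ⟨hS, fun T hT hST => (hmax T hT hST).symm.subset⟩,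
    fun ⟨hS, hmax⟩ => ⟨hS, fun _ hT hST => hST.antisymm (hmax hT hST)⟩⟩

lemma exists_isMaxStable_superset {A : Finset V} (hA : IsStable G A) :
    ∃ S, A ⊆ S ∧ IsMaxStable G S := by
  obtain ⟨S, hAS, hS⟩ := Finite.exists_le_maximal (p := fun T : Finset V => IsStable G T) hA
  exact ⟨S, hAS, isMaxStable_iff_maximal.mpr hS⟩

lemma isMaxStable_iff_dominating {S : Finset V} :
    IsMaxStable G S ↔ IsStable G S ∧ ∀ z ∉ S, ∃ y ∈ S, G.Adj z y := by
  refine ⟨fun hS => ⟨hS.1, fun z hz => ?_⟩, fun ⟨hS, hdom⟩ => ⟨hS, fun T hT hST => ?_⟩⟩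
  · by_contra! hno
    have hstable : IsStable G ↑(insert z S) := by
      rw [Finset.coe_insert, isStable_insert]
      exact ⟨hS.1, fun y hy => hno y hy⟩
    exact hz ((hS.2 _ hstable (Finset.subset_insert z S)) ▸ Finset.mem_insert_self z S)
  · by_contra hne
    obtain ⟨z, hzT, hzS⟩ := Finset.exists_of_ssubset (hST.ssubset_of_ne hne)
    obtain ⟨y, hyS, hzy⟩ := hdom z hzS
    exact hT hzT (hST hyS) hzy

lemma IsMaxStable.insert_erase_of_twins {S : Finset V} {u x : V} (hS : IsMaxStable G S) (hu : u ∈ S)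
    (htw : Twins G u x) (hadj : G.Adj u x) : IsMaxStable G (insert x (S.erase u)) := by
  have hx : x ∉ S := fun hx => hS.1 hu hx hadj
  rw [isMaxStable_iff_dominating, Finset.coe_insert, isStable_insert]
  refine ⟨⟨fun a ha b hb => hS.1 (Finset.mem_of_mem_erase ha) (Finset.mem_of_mem_erase hb),
    fun y hy hxy => ?_⟩, fun z hz => ?_⟩
  · obtain ⟨hyu, hyS⟩ := Finset.mem_erase.mp hy
    exact hS.1 hu hyS ((htw.adj_iff hyu (ne_of_mem_of_not_mem hyS hx)).mpr hxy)
  · simp only [Finset.mem_insert, Finset.mem_erase, not_or, not_and_or, not_not] at hz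
    obtain ⟨hzx, hzu | hzS⟩ := hz
    · exact ⟨x, Finset.mem_insert_self x _, hzu ▸ hadj⟩
    obtain ⟨y, hyS, hzy⟩ := (isMaxStable_iff_dominating.mp hS).2 z hzS
    by_cases hyu : y = u
    · subst hyu
      exact ⟨x, Finset.mem_insert_self x _,
        ((htw.adj_iff (ne_of_mem_of_not_mem hyS hzS).symm hzx).mp hzy.symm).symm⟩
    · exact ⟨y, Finset.mem_insert_of_mem (Finset.mem_erase.mpr ⟨hyu, hyS⟩), hzy⟩

end MaxStable

namespace EquistableStruct

variable [Fintype V] [DecidableEq V] {w : V → ℕ} {t : ℕ}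

lemma isMaxStable_insert_erase_iff (hw : EquistableStruct G w t) {S : Finset V} {a b : V}
    (hS : IsMaxStable G S) (ha : a ∈ S) (hb : b ∉ S) :
    IsMaxStable G (insert b (S.erase a)) ↔ w b = w a := by
  have hsum := (hw S).mp hS
  rw [← Finset.sum_erase_add S w ha] at hsum
  rw [hw, Finset.sum_insert fun h => hb (Finset.mem_of_mem_erase h)]
  omega

lemma adj_of_weight_eq (hw : EquistableStruct G w t) {a b z : V} (hab : w a = w b)
    (haz : G.Adj a z) (hzb : z ≠ b) : G.Adj b z := by
  by_contra hbz
  have hpair : IsStable G ↑({b, z} : Finset V) := by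
    rw [Finset.coe_insert, Finset.coe_singleton, isStable_insert]
    exact ⟨isStable_singleton z, fun y hy => hy ▸ hbz⟩
  obtain ⟨S, hpairS, hS⟩ := exists_isMaxStable_superset hpair
  have hbS : b ∈ S := hpairS (by simp)
  have hzS : z ∈ S := hpairS (by simp)
  have hswap := (hw.isMaxStable_insert_erase_iff hS hbS fun haS => hS.1 haS hzS haz).mpr hab
  exact hswap.1 (by simp) (by simp [hzb, hzS]) haz

lemma twins_of_weight_eq (hw : EquistableStruct G w t) {a b : V} (hab : w a = w b) :
    Twins G a b :=
  twins_of_forall_adj (fun _ => hw.adj_of_weight_eq hab) (fun _ => hw.adj_of_weight_eq hab.symm)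

lemma weight_eq_of_twins_of_adj (hw : EquistableStruct G w t) {u x : V} (htw : Twins G u x)
    (hadj : G.Adj u x) : w x = w u := by
  obtain ⟨S, huS, hS⟩ := exists_isMaxStable_superset (G := G)
    (Finset.coe_singleton u ▸ isStable_singleton u)
  have hu : u ∈ S := huS (Finset.mem_singleton_self u)
  exact (hw.isMaxStable_insert_erase_iff hS hu fun hx => hS.1 hu hx hadj).mp (hS.insert_erase_of_twins hu htw hadj)

end EquistableStruct

theorem stmt7 [Fintype V] [DecidableEq V] (G : SimpleGraph V) (w : V → ℕ) (t : ℕ)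
    (hpos : ∀ x, 1 ≤ w x) (hw : EquistableStruct G w t)
    (C : Set V) (hC : TwinClass G C) (hclique : G.IsClique C) :
    ∃ i : ℕ, 0 < i ∧ C = {x | w x = i} := by
  obtain ⟨u, rfl⟩ := hC
  refine ⟨w u, hpos u, Set.ext fun x => ⟨fun hx => ?_, fun hx => hw.twins_of_weight_eq hx.symm⟩⟩
  by_cases hxu : x = u
  · exact congrArg w hxu
  · exact hw.weight_eq_of_twins_of_adj hx (hclique (show Twins G u u from rfl) hx (Ne.symm hxu))
end

section
/- Let G be a graph in which every twin class of size at least k(k+1) is a clique class, and suppose G has at most k twin classes. Then every maximal stable set of G has at most k²(k+1) vertices, and hence for any k-equistable structure (w, t) of G, the target satisfies t ≤ k³(k+1). -/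
open Finset

variable {V : Type*}

theorem stmt10 [Fintype V] [DecidableEq V] (G : SimpleGraph V) (k : ℕ)
    (hclasses : {C : Set V | TwinClass G C}.ncard ≤ k)
    (hbig : ∀ C : Set V, TwinClass G C → k * (k + 1) ≤ C.ncard → G.IsClique C) :
    (∀ S : Finset V, IsMaxStable G S → S.card ≤ k ^ 2 * (k + 1)) ∧
    (∀ (w : V → ℕ) (t : ℕ), (∀ x, 1 ≤ w x ∧ w x ≤ k) → EquistableStruct G w t →
      t ≤ k ^ 3 * (k + 1)) := by
  classical
  have key : ∀ S : Finset V, IsMaxStable G S → S.card ≤ k ^ 2 * (k + 1) := by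
    intro S hS
    set f : V → Set V := fun u => {v | Twins G u v} with hf
    set F : Finset (Set V) := (Finset.univ : Finset V).image f with hF
    have hFset : (↑F : Set (Set V)) = {C : Set V | TwinClass G C} := by
      ext C
      simp only [hF, Finset.coe_image, Finset.coe_univ, Set.image_univ, Set.mem_range,
        Set.mem_setOf_eq, TwinClass, f, eq_comm]
    have hFcard : F.card ≤ k := by
      calc F.card = (↑F : Set (Set V)).ncard := (Set.ncard_coe_finset F).symm
        _ = _ := by rw [hFset]
        _ ≤ k := hclasses
    have hrefl : ∀ u, u ∈ f u := by
      intro u; simp [f, Twins]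
    have hsub : S ⊆ F.biUnion (fun C => S.filter (fun v => v ∈ C)) := by
      intro v hv
      simp only [Finset.mem_biUnion]
      exact ⟨f v, Finset.mem_image_of_mem f (Finset.mem_univ v),
        Finset.mem_filter.2 ⟨hv, hrefl v⟩⟩
    have hbound : ∀ C ∈ F, (S.filter (fun v => v ∈ C)).card ≤ k * (k + 1) := by
      intro C hC
      have hk1 : 1 ≤ k := le_trans (Finset.card_pos.mpr ⟨C, hC⟩) hFcard
      have htc : TwinClass G C := by
        have hC2 := hC
        simp only [hF, Finset.mem_image] at hC2
        obtain ⟨u, -, hu⟩ := hC2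
        exact ⟨u, hu.symm⟩
      by_cases h : k * (k + 1) ≤ C.ncard
      · have hclq := hbig C htc h
        have hle1 : (S.filter (fun v => v ∈ C)).card ≤ 1 := by
          rw [Finset.card_le_one]
          intro a ha b hb
          simp only [Finset.mem_filter] at ha hb
          by_contra hne
          exact hS.1 ha.1 hb.1 (hclq ha.2 hb.2 hne)
        have : 1 ≤ k * (k + 1) := Nat.one_le_iff_ne_zero.2 (by positivity)
        omega
      · have hle : (S.filter (fun v => v ∈ C)).card ≤ C.ncard := by
          rw [← Set.ncard_coe_finset (S.filter (fun v => v ∈ C))]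
          refine Set.ncard_le_ncard ?_ (Set.toFinite C)
          intro v hv
          simp only [Finset.coe_filter, Set.mem_setOf_eq] at hv
          exact hv.2
        omega
    calc S.card ≤ (F.biUnion (fun C => S.filter (fun v => v ∈ C))).card :=
          Finset.card_le_card hsub
      _ ≤ ∑ C ∈ F, (S.filter (fun v => v ∈ C)).card := Finset.card_biUnion_le
      _ ≤ ∑ _C ∈ F, k * (k + 1) := Finset.sum_le_sum hbound
      _ = F.card * (k * (k + 1)) := by rw [Finset.sum_const, smul_eq_mul]
      _ ≤ k * (k * (k + 1)) := Nat.mul_le_mul_right _ hFcard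
      _ = k ^ 2 * (k + 1) := by ring
  refine ⟨key, ?_⟩
  intro w t hw heq
  have hne : ((Finset.univ : Finset (Finset V)).filter
      (fun T : Finset V => IsStable G (T : Set V))).Nonempty :=
    ⟨∅, by simp [IsStable]⟩
  obtain ⟨S, hSmem, hSmax⟩ :=
    Finset.exists_max_image
      ((Finset.univ : Finset (Finset V)).filter (fun T : Finset V => IsStable G (T : Set V)))
      (fun T : Finset V => T.card) hne
  have hSstable : IsStable G ↑S := (Finset.mem_filter.1 hSmem).2
  have hSmaxstable : IsMaxStable G S := by
    refine ⟨hSstable, fun T hT hST => ?_⟩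
    have hTmem : T ∈ (Finset.univ : Finset (Finset V)).filter
        (fun T : Finset V => IsStable G (T : Set V)) :=
      Finset.mem_filter.2 ⟨Finset.mem_univ _, hT⟩
    exact Finset.eq_of_subset_of_card_le hST (hSmax T hTmem)
  have ht : ∑ x ∈ S, w x = t := (heq S).1 hSmaxstable
  have hcard := key S hSmaxstable
  calc t = ∑ x ∈ S, w x := ht.symm
    _ ≤ ∑ _x ∈ S, k := Finset.sum_le_sum (fun x _ => (hw x).2)
    _ = S.card * k := by rw [Finset.sum_const, smul_eq_mul]
    _ ≤ (k ^ 2 * (k + 1)) * k := Nat.mul_le_mul_right _ hcard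
    _ = k ^ 3 * (k + 1) := by ring
end
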